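/- For i = 1,…,t+1 let D_i ⊂ ℝ^m be nonempty bounded sets and let h_i : D_i → ℝ be bounded functions. Then the concave envelopes satisfy E_cc(h_1,…,h_{t+1}) = E_cc(E_cc(h_1,…,h_t), h_{t+1}). -/

import Mathlib

/-!
A concave function on `conv(D₁ ∪ ⋯ ∪ D_{t+1})` lies above `h₁, …, h_t` on their domains exactly
when it lies above their envelope `g₀` on `conv(D₁ ∪ ⋯ ∪ D_t)`, by minimality of `g₀`; and
`conv(conv(D₁ ∪ ⋯ ∪ D_t) ∪ D_{t+1}) = conv(D₁ ∪ ⋯ ∪ D_{t+1})`. So both envelopes are the least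
element of the same class of concave majorants on the same set.
-/

open MeasureTheory Filter Topology Set
open scoped ENNReal NNReal

noncomputable section

namespace ZTM

/-- The one-sided subshift of finite type `X_A` determined by a `d × d` 0-1 matrix `A`:
the set of sequences `x : ℕ → Fin d` with `A (x n) (x (n+1)) = 1` for all `n`, as a
topological (and Borel measurable) space with the product (cylinder) topology. -/
def Sft (d : ℕ) (A : Matrix (Fin d) (Fin d) (Fin 2)) : Type :=
  {x : ℕ → Fin d // ∀ n, A (x n) (x (n + 1)) = 1}

variable (d : ℕ) (A : Matrix (Fin d) (Fin d) (Fin 2))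

instance : TopologicalSpace (Sft d A) :=
  inferInstanceAs (TopologicalSpace {x : ℕ → Fin d // ∀ n, A (x n) (x (n + 1)) = 1})

instance : MeasurableSpace (Sft d A) := borel _

instance : BorelSpace (Sft d A) := ⟨rfl⟩

/-- The shift map `f : X_A → X_A`, `f(x)_n = x_{n+1}`. -/
def shift : Sft d A → Sft d A :=
  fun x => ⟨fun n => x.1 (n + 1), fun n => x.2 (n + 1)⟩

/-- The subshift is (topologically) transitive: some point has a dense orbit. -/
def IsTransitive : Prop :=
  ∃ x : Sft d A, Dense (Set.range fun n => (shift d A)^[n] x)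

/-- `μ` is a shift-invariant Borel probability measure on `X_A`. -/
def InvProb (μ : Measure (Sft d A)) : Prop :=
  IsProbabilityMeasure μ ∧ μ.map (shift d A) = μ

/-- Entropy `∑ -μ(P⁻¹{i}) log μ(P⁻¹{i})` of the finite partition induced by `P`. -/
def partEntropy {Y : Type*} [MeasurableSpace Y] {ι : Type*} [Fintype ι]
    (μ : Measure Y) (P : Y → ι) : ℝ :=
  ∑ i : ι, Real.negMulLog (μ (P ⁻¹' {i})).toReal

/-- Kolmogorov–Sinai (measure-theoretic) entropy `h_μ(g)`: the supremum over finite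
measurable partitions `P` of `lim_n H(P ∨ g⁻¹P ∨ ⋯ ∨ g⁻ⁿ⁺¹P)/n`; by subadditivity the
limit equals the infimum. -/
def ksEntropy {Y : Type*} [MeasurableSpace Y] (g : Y → Y) (μ : Measure Y) : ℝ :=
  ⨆ p : Σ k : ℕ, {P : Y → Fin k // Measurable P},
    ⨅ n : ℕ,
      partEntropy μ (fun y => fun i : Fin (n + 1) => p.2.1 (g^[(i : ℕ)] y)) / (n + 1)

/-- `μ` is an ergodic shift-invariant Borel probability measure. -/
def ErgInvProb (μ : Measure (Sft d A)) : Prop :=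
  InvProb d A μ ∧ Ergodic (shift d A) μ

/-- `Φ` is constant on all cylinders of length `k`. -/
def ConstOnCyl (k : ℕ) {V : Type*} (Φ : Sft d A → V) : Prop :=
  ∀ x y : Sft d A, (∀ i < k, x.1 i = y.1 i) → Φ x = Φ y

/-- The invariant measure `μ_x = (1/n)(δ_x + δ_{f x} + ⋯ + δ_{f^{n-1} x})` supported on the
orbit of a periodic point `x` of (minimal) period `n`. -/
def periodicMeasure (x : Sft d A) : Measure (Sft d A) :=
  (Function.minimalPeriod (shift d A) x : ℝ≥0∞)⁻¹ •
    ∑ i ∈ Finset.range (Function.minimalPeriod (shift d A) x),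
      Measure.dirac ((shift d A)^[i] x)

/-- The word of length `k` of `x`, determining the cylinder of length `k` containing `x`. -/
def word (k : ℕ) (x : Sft d A) : Fin k → Fin d := fun i => x.1 (i : ℕ)

/-- A periodic point `x` of prime period `n` is `k`-elementary if the cylinders of length
`k` containing `x, f(x), …, f^{n-1}(x)` are pairwise distinct. -/
def IsKElem (k : ℕ) (x : Sft d A) : Prop :=
  x ∈ Function.periodicPts (shift d A) ∧
    Set.InjOn (fun i => word d A k ((shift d A)^[i] x))
      (Set.Iio (Function.minimalPeriod (shift d A) x))

/-- Two `k`-elementary periodic points are `k`-permutable if their orbits generate the same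
collection of cylinders of length `k`. -/
def KPermutable (k : ℕ) (x y : Sft d A) : Prop :=
  (fun i => word d A k ((shift d A)^[i] x)) ''
      Set.Iio (Function.minimalPeriod (shift d A) x) =
    (fun i => word d A k ((shift d A)^[i] y)) ''
      Set.Iio (Function.minimalPeriod (shift d A) y)

/-- The rotation vector `rv(μ) = (∫φ₁ dμ, …, ∫φ_m dμ)` of a measure `μ`. -/
def rv (m : ℕ) (Φ : Sft d A → EuclideanSpace ℝ (Fin m)) (μ : Measure (Sft d A)) :
    EuclideanSpace ℝ (Fin m) :=
  (EuclideanSpace.equiv (Fin m) ℝ).symm fun j => ∫ x, Φ x j ∂μ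

/-- The generalized rotation set `Rot(Φ) = {rv(μ) : μ ∈ M}`. -/
def RotSet (m : ℕ) (Φ : Sft d A → EuclideanSpace ℝ (Fin m)) :
    Set (EuclideanSpace ℝ (Fin m)) :=
  {w | ∃ μ : Measure (Sft d A), InvProb d A μ ∧ rv d A m Φ μ = w}

/-- The localized entropy `H(w) = sup{h_μ(f) : μ ∈ M, rv(μ) = w}`. -/
def locEntropy (m : ℕ) (Φ : Sft d A → EuclideanSpace ℝ (Fin m))
    (w : EuclideanSpace ℝ (Fin m)) : ℝ :=
  sSup {h : ℝ | ∃ μ : Measure (Sft d A),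
    InvProb d A μ ∧ rv d A m Φ μ = w ∧ ksEntropy (shift d A) μ = h}

/-- `F` is a face of `K`: the intersection of `K` with a supporting hyperplane. -/
def IsFaceOf {m : ℕ} (F K : Set (EuclideanSpace ℝ (Fin m))) : Prop :=
  ∃ (α : EuclideanSpace ℝ (Fin m)) (a : ℝ), α ≠ 0 ∧
    (∀ u ∈ K, (inner ℝ α u : ℝ) ≤ a) ∧ (∃ u ∈ K, (inner ℝ α u : ℝ) = a) ∧
    F = K ∩ {u | (inner ℝ α u : ℝ) = a}

/-- `w` is a vertex (exposed point) of `K`: the singleton `{w}` is a face of `K`. -/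
def IsVertex {m : ℕ} (K : Set (EuclideanSpace ℝ (Fin m)))
    (w : EuclideanSpace ℝ (Fin m)) : Prop :=
  IsFaceOf {w} K

/-- The face `F_α(Φ)` of the rotation set in direction `α`. -/
def dirFace (m : ℕ) (Φ : Sft d A → EuclideanSpace ℝ (Fin m))
    (α : EuclideanSpace ℝ (Fin m)) : Set (EuclideanSpace ℝ (Fin m)) :=
  {w | w ∈ RotSet d A m Φ ∧
    (inner ℝ α w : ℝ) = sSup ((fun u => (inner ℝ α u : ℝ)) '' RotSet d A m Φ)}

/-- `μ` is an equilibrium state of `φ`. -/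
def IsEqState (φ : Sft d A → ℝ) (μ : Measure (Sft d A)) : Prop :=
  InvProb d A μ ∧ ∀ ν : Measure (Sft d A), InvProb d A ν →
    ksEntropy (shift d A) ν + ∫ x, φ x ∂ν ≤ ksEntropy (shift d A) μ + ∫ x, φ x ∂μ

/-- Weak* convergence of measures along a filter. -/
def WeakLimit {ι : Type*} (l : Filter ι) (μs : ι → Measure (Sft d A))
    (μ : Measure (Sft d A)) : Prop :=
  ∀ g : C(Sft d A, ℝ), Tendsto (fun t => ∫ x, g x ∂(μs t)) l (𝓝 (∫ x, g x ∂μ))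

/-- `μ∞` is the zero-temperature measure of `φ`: the weak* limit as `t → ∞` of the
equilibrium states `μ_{tφ}`. -/
def IsZeroTempMeasure (φ : Sft d A → ℝ) (μlim : Measure (Sft d A)) : Prop :=
  ∃ μt : ℝ → Measure (Sft d A),
    (∀ t : ℝ, IsEqState d A (fun x => t * φ x) (μt t)) ∧ WeakLimit d A atTop μt μlim

/-- `μ` is a ground state of `φ`: a weak* accumulation point of equilibrium states
`μ_{t_n φ}` with `t_n → ∞`. -/
def IsGroundState (φ : Sft d A → ℝ) (μ : Measure (Sft d A)) : Prop :=
  ∃ (t : ℕ → ℝ) (μn : ℕ → Measure (Sft d A)),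
    Tendsto t atTop atTop ∧ (∀ n, IsEqState d A (fun x => t n * φ x) (μn n)) ∧
    WeakLimit d A atTop μn μ

/-- `μ` is a maximizing measure of `φ`. -/
def IsMaximizing (φ : Sft d A → ℝ) (μ : Measure (Sft d A)) : Prop :=
  InvProb d A μ ∧ ∀ ν : Measure (Sft d A), InvProb d A ν → ∫ x, φ x ∂ν ≤ ∫ x, φ x ∂μ

/-- `μ` is a measure of maximal entropy among invariant measures supported on `Y`. -/
def IsMMEOn (Y : Set (Sft d A)) (μ : Measure (Sft d A)) : Prop :=
  InvProb d A μ ∧ μ Yᶜ = 0 ∧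
    ∀ ν : Measure (Sft d A), InvProb d A ν → ν Yᶜ = 0 →
      ksEntropy (shift d A) ν ≤ ksEntropy (shift d A) μ

/-- `μ` is the unique measure of maximal entropy of the subsystem `Y`. -/
def IsUniqueMMEOn (Y : Set (Sft d A)) (μ : Measure (Sft d A)) : Prop :=
  IsMMEOn d A Y μ ∧ ∀ ν : Measure (Sft d A), IsMMEOn d A Y ν → ν = μ

/-- `Y ⊆ X_A` is itself a subshift of finite type: it is cut out by a finite list of
allowed words of some length `l`. -/
def IsSubSFT (Y : Set (Sft d A)) : Prop :=
  ∃ (l : ℕ) (W : Set (Fin l → Fin d)),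
    Y = {x : Sft d A | ∀ n : ℕ, (fun i : Fin l => x.1 (n + (i : ℕ))) ∈ W}

/-- The restriction of the shift to `Y` is transitive. -/
def TransitiveOn (Y : Set (Sft d A)) : Prop :=
  ∃ y ∈ Y, closure (Set.range fun n => (shift d A)^[n] y) = Y

/-- The number `m_c(k)` of nonempty cylinders of length `k` in `X_A`. -/
def numCyl (k : ℕ) : ℕ :=
  Set.ncard {w : Fin k → Fin d | ∃ x : Sft d A, word d A k x = w}

/-- `Φ ∈ U(k)`: (a) all `k`-elementary periodic points over a vertex of `Rot(Φ)` are
`k`-permutable, and (b) rotation vectors of `k`-elementary periodic points on the relative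
boundary of `Rot(Φ)` are vertices. -/
def MemUk (k m : ℕ) (Φ : Sft d A → EuclideanSpace ℝ (Fin m)) : Prop :=
  ConstOnCyl d A k Φ ∧
  (∀ w, IsVertex (RotSet d A m Φ) w →
    ∀ x y, IsKElem d A k x → IsKElem d A k y →
      rv d A m Φ (periodicMeasure d A x) = w →
      rv d A m Φ (periodicMeasure d A y) = w → KPermutable d A k x y) ∧
  (∀ x, IsKElem d A k x →
    rv d A m Φ (periodicMeasure d A x) ∈ intrinsicFrontier ℝ (RotSet d A m Φ) →
    IsVertex (RotSet d A m Φ) (rv d A m Φ (periodicMeasure d A x)))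

/-- The dimension of the rotation set (the dimension of its affine hull). -/
def rotDim (m : ℕ) (Φ : Sft d A → EuclideanSpace ℝ (Fin m)) : ℕ :=
  Module.finrank ℝ (affineSpan ℝ (RotSet d A m Φ)).direction

/-- The topological entropy of the (transitive) subshift, via the variational principle. -/
def topEntropy : ℝ :=
  sSup {h : ℝ | ∃ μ : Measure (Sft d A), InvProb d A μ ∧ ksEntropy (shift d A) μ = h}

/-- Rotation set of `Φ` restricted to the subsystem `Y`. -/
def RotSetOn (Y : Set (Sft d A)) (m : ℕ) (Φ : Sft d A → EuclideanSpace ℝ (Fin m)) :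
    Set (EuclideanSpace ℝ (Fin m)) :=
  {w | ∃ μ : Measure (Sft d A), InvProb d A μ ∧ μ Yᶜ = 0 ∧ rv d A m Φ μ = w}

/-- Localized entropy of `Φ` with respect to the subsystem `Y`. -/
def locEntropyOn (Y : Set (Sft d A)) (m : ℕ) (Φ : Sft d A → EuclideanSpace ℝ (Fin m))
    (w : EuclideanSpace ℝ (Fin m)) : ℝ :=
  sSup {h : ℝ | ∃ μ : Measure (Sft d A), InvProb d A μ ∧ μ Yᶜ = 0 ∧
    rv d A m Φ μ = w ∧ ksEntropy (shift d A) μ = h}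

/-- `g` is the concave envelope `E_cc(h₁,…,h_t)` of the functions `h i : D i → ℝ`:
the smallest concave function on `conv(⋃ D i)` lying above every `h i` on `D i`. -/
def IsConcaveEnvelope {E : Type*} [AddCommGroup E] [Module ℝ E] {ι : Type*}
    (D : ι → Set E) (h : ι → E → ℝ) (g : E → ℝ) : Prop :=
  ConcaveOn ℝ (convexHull ℝ (⋃ i, D i)) g ∧
  (∀ i, ∀ x ∈ D i, h i x ≤ g x) ∧
  ∀ g' : E → ℝ, ConcaveOn ℝ (convexHull ℝ (⋃ i, D i)) g' →
    (∀ i, ∀ x ∈ D i, h i x ≤ g' x) →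
    ∀ x ∈ convexHull ℝ (⋃ i, D i), g x ≤ g' x


/-- `μ` is a finite convex combination of measures from the set `Ms`. -/
def IsConvexComb (Ms : Set (Measure (Sft d A))) (μ : Measure (Sft d A)) : Prop :=
  ∃ (n : ℕ) (a : Fin n → ℝ) (ν : Fin n → Measure (Sft d A)),
    (∀ j, ν j ∈ Ms) ∧ (∀ j, 0 ≤ a j) ∧ (∑ j, a j) = 1 ∧
    μ = ∑ j, ENNReal.ofReal (a j) • ν j

/-- The metric `d(x,y) = 2^{-min{n : x_n ≠ y_n}}` on the shift space. -/
def sftDist (x y : Sft d A) : ℝ :=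
  letI : Decidable (x = y) := Classical.propDecidable _
  if h : x = y then 0
  else (2 : ℝ)⁻¹ ^ Nat.find (p := fun n => x.1 n ≠ y.1 n)
    (by
      by_contra hc
      push_neg at hc
      exact h (Subtype.ext (funext fun n => hc n)))

variable {E ι κ : Type*} [AddCommGroup E] [Module ℝ E]

theorem isConcaveEnvelope_congr {D : ι → Set E} {D' : κ → Set E} {h : ι → E → ℝ}
    {h' : κ → E → ℝ} {g : E → ℝ}
    (hull : convexHull ℝ (⋃ i, D i) = convexHull ℝ (⋃ j, D' j))
    (majorant : ∀ f : E → ℝ, ConcaveOn ℝ (convexHull ℝ (⋃ i, D i)) f →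
      ((∀ i, ∀ x ∈ D i, h i x ≤ f x) ↔ ∀ j, ∀ x ∈ D' j, h' j x ≤ f x)) :
    IsConcaveEnvelope D h g ↔ IsConcaveEnvelope D' h' g := by
  unfold IsConcaveEnvelope
  rw [← hull]
  constructor
  · rintro ⟨hconc, hle, hleast⟩
    exact ⟨hconc, (majorant g hconc).1 hle,
      fun f hf hfle => hleast f hf ((majorant f hf).2 hfle)⟩
  · rintro ⟨hconc, hle, hleast⟩
    exact ⟨hconc, (majorant g hconc).2 hle,
      fun f hf hfle => hleast f hf ((majorant f hf).1 hfle)⟩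

theorem IsConcaveEnvelope.forall_le_iff {D : ι → Set E} {h : ι → E → ℝ} {g₀ : E → ℝ}
    (hg₀ : IsConcaveEnvelope D h g₀) {s : Set E} (hs : convexHull ℝ (⋃ i, D i) ⊆ s)
    {f : E → ℝ} (hf : ConcaveOn ℝ s f) :
    (∀ i, ∀ x ∈ D i, h i x ≤ f x) ↔ ∀ x ∈ convexHull ℝ (⋃ i, D i), g₀ x ≤ f x := by
  refine ⟨hg₀.2.2 f (hf.subset hs (convex_convexHull ℝ _)), fun hle i x hx => ?_⟩
  have hx' : x ∈ convexHull ℝ (⋃ i, D i) := subset_convexHull ℝ _ (Set.mem_iUnion_of_mem i hx)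
  exact (hg₀.2.1 i x hx).trans (hle x hx')

theorem concaveEnvelope_iterate_general {m t : ℕ}
    (D : Fin (t + 1) → Set (EuclideanSpace ℝ (Fin m)))
    (h : Fin (t + 1) → EuclideanSpace ℝ (Fin m) → ℝ)
    (g₀ : EuclideanSpace ℝ (Fin m) → ℝ)
    (hg₀ : IsConcaveEnvelope (fun i : Fin t => D i.castSucc)
      (fun i : Fin t => h i.castSucc) g₀)
    (g : EuclideanSpace ℝ (Fin m) → ℝ) :
    IsConcaveEnvelope D h g ↔
      IsConcaveEnvelope
        ![convexHull ℝ (⋃ i : Fin t, D i.castSucc), D (Fin.last t)]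
        ![g₀, h (Fin.last t)] g := by
  set K := convexHull ℝ (⋃ i : Fin t, D i.castSucc)
  have hsplit : ⋃ i, D i = (⋃ i : Fin t, D i.castSucc) ∪ D (Fin.last t) :=
    Set.iUnion_fin_add_one_eq_iUnion_castSucc D
  have hpair : ⋃ j, ![K, D (Fin.last t)] j = K ∪ D (Fin.last t) := by
    ext x
    simp [Fin.exists_fin_two]
  have hull : convexHull ℝ (⋃ i, D i) = convexHull ℝ (⋃ j, ![K, D (Fin.last t)] j) := by
    rw [hpair, convexHull_convexHull_union_left, hsplit]
  refine isConcaveEnvelope_congr hull fun f hf => ?_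
  have hK : K ⊆ convexHull ℝ (⋃ i, D i) := convexHull_mono (hsplit ▸ Set.subset_union_left)
  rw [Fin.forall_fin_succ', Fin.forall_fin_two, hg₀.forall_le_iff hK hf]
  rfl

/-- Iteration of concave envelopes: `E_cc(h₁,…,h_{t+1}) = E_cc(E_cc(h₁,…,h_t), h_{t+1})`,
where the inner envelope is regarded as a function on `conv(D₁ ∪ ⋯ ∪ D_t)`. -/
theorem concaveEnvelope_iterate {m t : ℕ}
    (D : Fin (t + 1) → Set (EuclideanSpace ℝ (Fin m)))
    (h : Fin (t + 1) → EuclideanSpace ℝ (Fin m) → ℝ)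
    (hne : ∀ i, (D i).Nonempty) (hbd : ∀ i, Bornology.IsBounded (D i))
    (hhb : ∀ i, ∃ C : ℝ, ∀ x ∈ D i, |h i x| ≤ C)
    (g₀ : EuclideanSpace ℝ (Fin m) → ℝ)
    (hg₀ : IsConcaveEnvelope (fun i : Fin t => D i.castSucc)
      (fun i : Fin t => h i.castSucc) g₀)
    (g : EuclideanSpace ℝ (Fin m) → ℝ) :
    IsConcaveEnvelope D h g ↔
      IsConcaveEnvelope
        ![convexHull ℝ (⋃ i : Fin t, D i.castSucc), D (Fin.last t)]
        ![g₀, h (Fin.last t)] g :=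
  concaveEnvelope_iterate_general D h g₀ hg₀ g

end ZTM
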